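/- For C ∈ [0,1) and any function α̅ : {-1,1}^k → [-1,1] arising as the average α̅(S,Ŝ) = E[α(S)α(Ŝ)] over a distribution supported on balanced Boolean functions α (balanced meaning Σ_S α(S) = 0), one has tanh²(β)·Σ_{S,Ŝ}(∏_j (1+S_j Ŝ_j C)/4)·sgn(Σ_j S_j Ŝ_j) ≥ tanh²(β)·Σ_{S,Ŝ}(∏_j (1+S_j Ŝ_j C)/4)·E[α(S)α(Ŝ)], with the reversed inequality for C ∈ (-1,0]. -/
import Mathlib

/-- `pm b` maps a Boolean to the spin value ±1. -/
noncomputable def pm (b : Bool) : ℝ := if b then 1 else -1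

open Finset



lemma pm_sq (b : Bool) : pm b * pm b = 1 := by cases b <;> simp [pm]
lemma pm_not (b : Bool) : pm (!b) = - pm b := by cases b <;> simp [pm]
lemma pm_cases (b : Bool) : pm b = 1 ∨ pm b = -1 := by cases b <;> simp [pm]

lemma pmm_cases (a b : Bool) : pm a * pm b = 1 ∨ pm a * pm b = -1 := by
  cases a <;> cases b <;> simp [pm]

lemma pmm_eq_one {a b : Bool} (h : a = b) : pm a * pm b = 1 := by rw [h, pm_sq]
lemma pmm_eq_neg_one {a b : Bool} (h : ¬ a = b) : pm a * pm b = -1 := by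
  cases a <;> cases b <;> simp_all [pm]

lemma sum_pi_prod {k : ℕ} (h : Fin k → Bool → ℝ) :
    ∑ S : Fin k → Bool, ∏ j, h j (S j) = ∏ j, ∑ b : Bool, h j b := by
  rw [Finset.prod_univ_sum, Fintype.piFinset_univ]

lemma sum_pi_prod2 {k : ℕ} (g : Fin k → Bool → Bool → ℝ) :
    ∑ S : Fin k → Bool, ∑ T : Fin k → Bool, ∏ j, g j (S j) (T j)
      = ∏ j, ∑ a : Bool, ∑ b : Bool, g j a b := by
  have h1 : ∀ S : Fin k → Bool, ∑ T : Fin k → Bool, ∏ j, g j (S j) (T j)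
      = ∏ j, ∑ b : Bool, g j (S j) b := fun S => sum_pi_prod (fun j b => g j (S j) b)
  rw [Finset.sum_congr rfl (fun S _ => h1 S)]
  exact sum_pi_prod (fun j a => ∑ b : Bool, g j a b)

/-- number of agreeing coordinates -/
def N {k : ℕ} (S T : Fin k → Bool) : ℕ := (univ.filter (fun j => S j = T j)).card

lemma N_le {k : ℕ} (S T : Fin k → Bool) : N S T ≤ k := by
  classical
  calc N S T ≤ (univ : Finset (Fin k)).card := Finset.card_filter_le _ _
  _ = k := by simp

lemma card_not {k : ℕ} (S T : Fin k → Bool) :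
    (univ.filter (fun j => ¬ S j = T j)).card = k - N S T := by
  classical
  have := Finset.card_filter_add_card_filter_not (s := (univ : Finset (Fin k)))
    (p := fun j => S j = T j)
  simp only [Finset.card_univ, Fintype.card_fin] at this
  unfold N; omega

lemma prod_split {k : ℕ} (C : ℝ) (S T : Fin k → Bool) :
    ∏ j, (1 + pm (S j) * pm (T j) * C) = (1+C)^(N S T) * (1-C)^(k - N S T) := by
  classical
  rw [← Finset.prod_filter_mul_prod_filter_not univ (fun j => S j = T j)]
  have e1 : ∀ j ∈ univ.filter (fun j => S j = T j),
      (1 + pm (S j) * pm (T j) * C) = 1 + C := by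
    intro j hj
    rw [pmm_eq_one (Finset.mem_filter.mp hj).2, one_mul]
  have e2 : ∀ j ∈ univ.filter (fun j => ¬ S j = T j),
      (1 + pm (S j) * pm (T j) * C) = 1 - C := by
    intro j hj
    rw [pmm_eq_neg_one (Finset.mem_filter.mp hj).2]; ring
  rw [Finset.prod_congr rfl e1, Finset.prod_congr rfl e2, Finset.prod_const,
    Finset.prod_const, card_not]
  rfl

lemma msum {k : ℕ} (S T : Fin k → Bool) :
    (∑ j, pm (S j) * pm (T j)) = 2 * (N S T : ℝ) - k := by
  classical
  rw [← Finset.sum_filter_add_sum_filter_not univ (fun j => S j = T j)]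
  have e1 : ∀ j ∈ univ.filter (fun j => S j = T j), pm (S j) * pm (T j) = 1 := by
    intro j hj; exact pmm_eq_one (Finset.mem_filter.mp hj).2
  have e2 : ∀ j ∈ univ.filter (fun j => ¬ S j = T j), pm (S j) * pm (T j) = -1 := by
    intro j hj; exact pmm_eq_neg_one (Finset.mem_filter.mp hj).2
  rw [Finset.sum_congr rfl e1, Finset.sum_congr rfl e2, Finset.sum_const,
    Finset.sum_const, card_not, nsmul_eq_mul, nsmul_eq_mul]
  show (N S T : ℝ) * 1 + ((k - N S T : ℕ) : ℝ) * (-1) = _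
  push_cast [Nat.cast_sub (N_le S T)]
  ring


-- closed form for the weight
lemma W_eq {k : ℕ} (C : ℝ) (S T : Fin k → Bool) :
    (∏ j, (1 + pm (S j) * pm (T j) * C) / 4)
      = (1+C)^(N S T) * (1-C)^(k - N S T) / 4^k := by
  rw [Finset.prod_div_distrib, prod_split, Finset.prod_const, Finset.card_univ,
    Fintype.card_fin]

lemma wcmp {C : ℝ} (hC0 : 0 ≤ C) (hC1 : C ≤ 1) {a b : ℕ} (hab : b ≤ a) :
    (1+C)^b * (1-C)^a ≤ (1+C)^a * (1-C)^b := by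
  obtain ⟨d, rfl⟩ := Nat.exists_eq_add_of_le hab
  rw [pow_add, pow_add]
  have h1 : (0:ℝ) ≤ 1 - C := by linarith
  have h2 : (1:ℝ) - C ≤ 1 + C := by linarith
  calc (1+C)^b * ((1-C)^b * (1-C)^d) = (1+C)^b * (1-C)^b * (1-C)^d := by ring
  _ ≤ (1+C)^b * (1-C)^b * (1+C)^d := by
      apply mul_le_mul_of_nonneg_left (pow_le_pow_left₀ h1 h2 d) (by positivity)
  _ = (1+C)^b * (1+C)^d * (1-C)^b := by ring

-- pointwise symmetrization inequality
lemma termwise {k : ℕ} {C : ℝ} (hC0 : 0 ≤ C) (hC1 : C ≤ 1) (i0 : Fin k)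
    (S T : Fin k → Bool) :
    0 ≤ ((∏ j, (1 + pm (S j) * pm (T j) * C) / 4)
          - (∏ j, (1 + pm (S j) * pm (T j) * (-C)) / 4))
        * (Real.sign (∑ j, pm (S j) * pm (T j)) - pm (S i0) * pm (T i0)) := by
  have h4 : (0:ℝ) < 4^k := by positivity
  rw [W_eq, W_eq, msum]
  have hNk := N_le S T
  have hcast : ((k - N S T : ℕ) : ℝ) = (k : ℝ) - N S T := Nat.cast_sub hNk
  rcases lt_trichotomy (2 * (N S T : ℝ) - k) 0 with hm | hm | hm
  · -- negative sum: N ≤ k - N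
    rw [Real.sign_of_neg hm]
    have hab : N S T ≤ k - N S T := by
      have : (N S T : ℝ) * 2 < k := by linarith
      have : N S T * 2 < k := by exact_mod_cast this
      omega
    have h1m : (1 + -C) = 1 - C := by ring
    have h2m : (1 - -C) = 1 + C := by ring
    rw [h1m, h2m, div_sub_div_same]
    have ha : ((1 + C) ^ N S T * (1 - C) ^ (k - N S T)
        - (1 - C) ^ N S T * (1 + C) ^ (k - N S T)) / 4 ^ k ≤ 0 := by
      apply div_nonpos_of_nonpos_of_nonneg _ (le_of_lt h4)
      nlinarith [wcmp hC0 hC1 hab]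
    have hb : (-1 : ℝ) - pm (S i0) * pm (T i0) ≤ 0 := by
      rcases pmm_cases (S i0) (T i0) with h | h <;> rw [h] <;> norm_num
    nlinarith [mul_nonneg (neg_nonneg.2 ha) (neg_nonneg.2 hb)]
  · -- zero sum: weights equal
    have hN2 : 2 * N S T = k := by
      have : (N S T : ℝ) * 2 = k := by linarith
      have : N S T * 2 = k := by exact_mod_cast this
      omega
    have heq : k - N S T = N S T := by omega
    rw [heq]
    have h1m : (1 + -C) = 1 - C := by ring
    have h2m : (1 - -C) = 1 + C := by ring
    rw [h1m, h2m]
    rw [show (1+C)^(N S T) * (1-C)^(N S T) / 4^k - (1-C)^(N S T) * (1+C)^(N S T) / 4^k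
      = 0 from by ring, zero_mul]
  · -- positive sum
    rw [Real.sign_of_pos hm]
    have hab : k - N S T ≤ N S T := by
      have : (k:ℝ) < N S T * 2 := by linarith
      have : k < N S T * 2 := by exact_mod_cast this
      omega
    have h1m : (1 + -C) = 1 - C := by ring
    have h2m : (1 - -C) = 1 + C := by ring
    rw [h1m, h2m, div_sub_div_same]
    apply mul_nonneg
    · apply div_nonneg _ (le_of_lt h4)
      nlinarith [wcmp hC0 hC1 hab]
    · rcases pmm_cases (S i0) (T i0) with h | h <;> rw [h] <;> norm_num

-- Σ_{S,T} W(S,T) * pm(S i0) pm(T i0) = C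
lemma mean1 {k : ℕ} (C : ℝ) (i0 : Fin k) :
    ∑ S : Fin k → Bool, ∑ T : Fin k → Bool,
      (∏ j, (1 + pm (S j) * pm (T j) * C) / 4) * (pm (S i0) * pm (T i0)) = C := by
  have key : ∀ (S T : Fin k → Bool),
      (∏ j, (1 + pm (S j) * pm (T j) * C) / 4) * (pm (S i0) * pm (T i0))
      = ∏ j, ((1 + pm (S j) * pm (T j) * C) / 4
          * (if j = i0 then pm (S j) * pm (T j) else 1)) := by
    intro S T
    rw [Finset.prod_mul_distrib, Finset.prod_ite_eq' univ i0
      (fun j => pm (S j) * pm (T j)), if_pos (Finset.mem_univ i0)]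
  calc ∑ S : Fin k → Bool, ∑ T : Fin k → Bool,
      (∏ j, (1 + pm (S j) * pm (T j) * C) / 4) * (pm (S i0) * pm (T i0))
      = ∑ S : Fin k → Bool, ∑ T : Fin k → Bool,
        ∏ j, ((1 + pm (S j) * pm (T j) * C) / 4
          * (if j = i0 then pm (S j) * pm (T j) else 1)) :=
        Finset.sum_congr rfl fun S _ => Finset.sum_congr rfl fun T _ => key S T
    _ = ∏ j, ∑ a : Bool, ∑ b : Bool, ((1 + pm a * pm b * C) / 4
          * (if j = i0 then pm a * pm b else 1)) :=
        sum_pi_prod2 (fun j a b => (1 + pm a * pm b * C) / 4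
          * (if j = i0 then pm a * pm b else 1))
    _ = ∏ j, (if j = i0 then C else 1) := by
        apply Finset.prod_congr rfl
        intro j _
        by_cases h : j = i0 <;> simp only [h, if_true, if_false, Fintype.sum_bool] <;>
          simp [pm] <;> ring
    _ = C := by
        rw [Finset.prod_ite_eq' univ i0 (fun _ => C), if_pos (Finset.mem_univ i0)]

-- flip symmetry of a general (S,T)-summand under negating T
lemma flip_sum {k : ℕ} (C : ℝ) (G : ℝ → ℝ) (hG : ∀ x, G (-x) = - G x) :
    ∑ S : Fin k → Bool, ∑ T : Fin k → Bool,
      (∏ j, (1 + pm (S j) * pm (T j) * (-C)) / 4) * G (∑ j, pm (S j) * pm (T j))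
    = - ∑ S : Fin k → Bool, ∑ T : Fin k → Bool,
      (∏ j, (1 + pm (S j) * pm (T j) * C) / 4) * G (∑ j, pm (S j) * pm (T j)) := by
  have inv : Function.Involutive (fun T : Fin k → Bool => (fun j => !(T j))) := by
    intro T; funext j; simp
  rw [← Finset.sum_neg_distrib]
  apply Finset.sum_congr rfl
  intro S _
  rw [← Finset.sum_neg_distrib]
  rw [← Equiv.sum_comp inv.toPerm
    (fun T => (∏ j, (1 + pm (S j) * pm (T j) * (-C)) / 4) * G (∑ j, pm (S j) * pm (T j)))]
  apply Finset.sum_congr rfl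
  intro T _
  show (∏ j, (1 + pm (S j) * pm (!(T j)) * (-C)) / 4) * G (∑ j, pm (S j) * pm (!(T j)))
    = -((∏ j, (1 + pm (S j) * pm (T j) * C) / 4) * G (∑ j, pm (S j) * pm (T j)))
  have e1 : ∀ j, (1 + pm (S j) * pm (!(T j)) * (-C)) / 4
      = (1 + pm (S j) * pm (T j) * C) / 4 := by
    intro j; rw [pm_not]; ring
  have e2 : (∑ j, pm (S j) * pm (!(T j))) = -(∑ j, pm (S j) * pm (T j)) := by
    rw [← Finset.sum_neg_distrib]
    apply Finset.sum_congr rfl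
    intro j _; rw [pm_not]; ring
  rw [Finset.prod_congr rfl (fun j _ => e1 j), e2, hG]
  ring

lemma flip_sum2 {k : ℕ} (C : ℝ) (i0 : Fin k) :
    ∑ S : Fin k → Bool, ∑ T : Fin k → Bool,
      (∏ j, (1 + pm (S j) * pm (T j) * (-C)) / 4)
        * (Real.sign (∑ j, pm (S j) * pm (T j)) - pm (S i0) * pm (T i0))
    = - ∑ S : Fin k → Bool, ∑ T : Fin k → Bool,
      (∏ j, (1 + pm (S j) * pm (T j) * C) / 4)
        * (Real.sign (∑ j, pm (S j) * pm (T j)) - pm (S i0) * pm (T i0)) := by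
  have inv : Function.Involutive (fun T : Fin k → Bool => (fun j => !(T j))) := by
    intro T; funext j; simp
  rw [← Finset.sum_neg_distrib]
  apply Finset.sum_congr rfl
  intro S _
  rw [← Finset.sum_neg_distrib]
  rw [← Equiv.sum_comp inv.toPerm
    (fun T => (∏ j, (1 + pm (S j) * pm (T j) * (-C)) / 4)
        * (Real.sign (∑ j, pm (S j) * pm (T j)) - pm (S i0) * pm (T i0)))]
  apply Finset.sum_congr rfl
  intro T _
  show (∏ j, (1 + pm (S j) * pm (!(T j)) * (-C)) / 4)
      * (Real.sign (∑ j, pm (S j) * pm (!(T j))) - pm (S i0) * pm (!(T i0)))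
    = -((∏ j, (1 + pm (S j) * pm (T j) * C) / 4)
      * (Real.sign (∑ j, pm (S j) * pm (T j)) - pm (S i0) * pm (T i0)))
  have e1 : ∀ j, (1 + pm (S j) * pm (!(T j)) * (-C)) / 4
      = (1 + pm (S j) * pm (T j) * C) / 4 := by
    intro j; rw [pm_not]; ring
  have e2 : (∑ j, pm (S j) * pm (!(T j))) = -(∑ j, pm (S j) * pm (T j)) := by
    rw [← Finset.sum_neg_distrib]
    apply Finset.sum_congr rfl
    intro j _; rw [pm_not]; ring
  rw [Finset.prod_congr rfl (fun j _ => e1 j), e2, Real.sign_neg, pm_not]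
  ring

lemma sgn_ge {k : ℕ} (hk : 0 < k) {C : ℝ} (hC0 : 0 ≤ C) (hC1 : C ≤ 1) :
    C ≤ ∑ S : Fin k → Bool, ∑ T : Fin k → Bool,
      (∏ j, (1 + pm (S j) * pm (T j) * C) / 4)
        * Real.sign (∑ j, pm (S j) * pm (T j)) := by
  set i0 : Fin k := ⟨0, hk⟩ with hi0
  have hm := mean1 C i0
  have hfl := flip_sum2 C i0
  have hterm : 0 ≤ ∑ S : Fin k → Bool, ∑ T : Fin k → Bool,
      ((∏ j, (1 + pm (S j) * pm (T j) * C) / 4)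
        - (∏ j, (1 + pm (S j) * pm (T j) * (-C)) / 4))
        * (Real.sign (∑ j, pm (S j) * pm (T j)) - pm (S i0) * pm (T i0)) :=
    Finset.sum_nonneg fun S _ => Finset.sum_nonneg fun T _ => termwise hC0 hC1 i0 S T
  have hsplit : ∑ S : Fin k → Bool, ∑ T : Fin k → Bool,
      ((∏ j, (1 + pm (S j) * pm (T j) * C) / 4)
        - (∏ j, (1 + pm (S j) * pm (T j) * (-C)) / 4))
        * (Real.sign (∑ j, pm (S j) * pm (T j)) - pm (S i0) * pm (T i0))
      = (∑ S : Fin k → Bool, ∑ T : Fin k → Bool,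
          (∏ j, (1 + pm (S j) * pm (T j) * C) / 4)
            * (Real.sign (∑ j, pm (S j) * pm (T j)) - pm (S i0) * pm (T i0)))
        - ∑ S : Fin k → Bool, ∑ T : Fin k → Bool,
          (∏ j, (1 + pm (S j) * pm (T j) * (-C)) / 4)
            * (Real.sign (∑ j, pm (S j) * pm (T j)) - pm (S i0) * pm (T i0)) := by
    rw [← Finset.sum_sub_distrib]
    apply Finset.sum_congr rfl; intro S _
    rw [← Finset.sum_sub_distrib]
    apply Finset.sum_congr rfl; intro T _
    ring
  have hsplit2 : ∑ S : Fin k → Bool, ∑ T : Fin k → Bool,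
      (∏ j, (1 + pm (S j) * pm (T j) * C) / 4)
        * (Real.sign (∑ j, pm (S j) * pm (T j)) - pm (S i0) * pm (T i0))
      = (∑ S : Fin k → Bool, ∑ T : Fin k → Bool,
          (∏ j, (1 + pm (S j) * pm (T j) * C) / 4)
            * Real.sign (∑ j, pm (S j) * pm (T j)))
        - ∑ S : Fin k → Bool, ∑ T : Fin k → Bool,
          (∏ j, (1 + pm (S j) * pm (T j) * C) / 4) * (pm (S i0) * pm (T i0)) := by
    rw [← Finset.sum_sub_distrib]
    apply Finset.sum_congr rfl; intro S _
    rw [← Finset.sum_sub_distrib]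
    apply Finset.sum_congr rfl; intro T _
    ring
  rw [hsplit, hfl, hsplit2, hm] at hterm
  linarith

lemma sgn_le {k : ℕ} (hk : 0 < k) {C : ℝ} (hC0 : -1 ≤ C) (hC1 : C ≤ 0) :
    (∑ S : Fin k → Bool, ∑ T : Fin k → Bool,
      (∏ j, (1 + pm (S j) * pm (T j) * C) / 4)
        * Real.sign (∑ j, pm (S j) * pm (T j))) ≤ C := by
  have h := sgn_ge (k := k) hk (C := -C) (by linarith) (by linarith)
  have hfl := flip_sum (k := k) (-C) Real.sign (fun x => Real.sign_neg)
  rw [neg_neg] at hfl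
  linarith


noncomputable def chi {k : ℕ} (S : Fin k → Bool) (A : Finset (Fin k)) : ℝ :=
  ∏ j ∈ A, pm (S j)

lemma expand {k : ℕ} (C : ℝ) (S T : Fin k → Bool) :
    ∏ j, (1 + pm (S j) * pm (T j) * C)
      = ∑ A ∈ (univ : Finset (Fin k)).powerset, C ^ A.card * (chi S A * chi T A) := by
  have e : ∀ j ∈ (univ : Finset (Fin k)), (1 + pm (S j) * pm (T j) * C)
      = (pm (S j) * pm (T j) * C + 1) := fun j _ => by ring
  rw [Finset.prod_congr rfl e, Finset.prod_add]
  apply Finset.sum_congr rfl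
  intro A _
  rw [Finset.prod_const_one, mul_one, Finset.prod_mul_distrib, Finset.prod_mul_distrib,
    Finset.prod_const]
  unfold chi; ring

lemma orth {k : ℕ} (S T : Fin k → Bool) :
    ∑ A ∈ (univ : Finset (Fin k)).powerset, chi S A * chi T A
      = if S = T then (2:ℝ)^k else 0 := by
  have h := expand 1 S T
  simp only [one_pow, one_mul] at h
  rw [← h]
  by_cases hST : S = T
  · subst hST
    rw [if_pos rfl]
    calc ∏ j, (1 + pm (S j) * pm (S j) * 1)
        = ∏ _j : Fin k, (2:ℝ) := Finset.prod_congr rfl fun j _ => by rw [pm_sq]; ring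
      _ = 2^k := by simp
  · rw [if_neg hST]
    obtain ⟨j, hj⟩ : ∃ j, ¬ S j = T j := by
      by_contra hc; push_neg at hc; exact hST (funext hc)
    apply Finset.prod_eq_zero (Finset.mem_univ j)
    rw [pmm_eq_neg_one hj]; ring

lemma fourier_pairs {k : ℕ} (C : ℝ) (f g : (Fin k → Bool) → ℝ) :
    ∑ S : Fin k → Bool, ∑ T : Fin k → Bool,
      (∏ j, (1 + pm (S j) * pm (T j) * C) / 4) * (f S * g T)
    = (∑ A ∈ (univ : Finset (Fin k)).powerset,
        C ^ A.card * ((∑ S : Fin k → Bool, f S * chi S A)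
          * (∑ T : Fin k → Bool, g T * chi T A))) / 4 ^ k := by
  have h1 : ∀ S T : Fin k → Bool,
      (∏ j, (1 + pm (S j) * pm (T j) * C) / 4) * (f S * g T)
      = (∑ A ∈ (univ : Finset (Fin k)).powerset,
          C ^ A.card * ((f S * chi S A) * (g T * chi T A))) / 4 ^ k := by
    intro S T
    rw [Finset.prod_div_distrib, Finset.prod_const, Finset.card_univ, Fintype.card_fin,
      expand, div_mul_eq_mul_div, Finset.sum_mul]
    congr 1
    apply Finset.sum_congr rfl; intro A _; ring
  simp only [h1, ← Finset.sum_div]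
  congr 1
  have h2 : ∀ S : Fin k → Bool,
      ∑ T : Fin k → Bool, ∑ A ∈ (univ : Finset (Fin k)).powerset,
        C ^ A.card * ((f S * chi S A) * (g T * chi T A))
      = ∑ A ∈ (univ : Finset (Fin k)).powerset, ∑ T : Fin k → Bool,
        C ^ A.card * ((f S * chi S A) * (g T * chi T A)) := fun S => Finset.sum_comm
  rw [Finset.sum_congr rfl (fun S _ => h2 S), Finset.sum_comm]
  apply Finset.sum_congr rfl
  intro A _
  rw [Finset.sum_mul_sum]
  simp only [Finset.mul_sum]

lemma parseval {k : ℕ} (f : (Fin k → Bool) → ℝ) (hf : ∀ S, f S * f S = 1) :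
    ∑ A ∈ (univ : Finset (Fin k)).powerset,
      (∑ S : Fin k → Bool, f S * chi S A) * (∑ S : Fin k → Bool, f S * chi S A)
      = 4 ^ k := by
  have h1 : ∀ A ∈ (univ : Finset (Fin k)).powerset,
      (∑ S : Fin k → Bool, f S * chi S A) * (∑ S : Fin k → Bool, f S * chi S A)
      = ∑ S : Fin k → Bool, ∑ T : Fin k → Bool, (f S * f T) * (chi S A * chi T A) := by
    intro A _
    rw [Finset.sum_mul_sum]
    apply Finset.sum_congr rfl; intro S _
    apply Finset.sum_congr rfl; intro T _
    ring
  rw [Finset.sum_congr rfl h1, Finset.sum_comm]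
  have h2 : ∀ S : Fin k → Bool,
      ∑ A ∈ (univ : Finset (Fin k)).powerset, ∑ T : Fin k → Bool,
        (f S * f T) * (chi S A * chi T A)
      = ∑ T : Fin k → Bool, ∑ A ∈ (univ : Finset (Fin k)).powerset,
        (f S * f T) * (chi S A * chi T A) := fun S => Finset.sum_comm
  rw [Finset.sum_congr rfl (fun S _ => h2 S)]
  have h3 : ∀ S T : Fin k → Bool,
      ∑ A ∈ (univ : Finset (Fin k)).powerset, (f S * f T) * (chi S A * chi T A)
      = if S = T then (f S * f T) * 2^k else 0 := by
    intro S T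
    rw [← Finset.mul_sum, orth]
    by_cases h : S = T <;> simp [h]
  calc ∑ S : Fin k → Bool, ∑ T : Fin k → Bool,
      ∑ A ∈ (univ : Finset (Fin k)).powerset, (f S * f T) * (chi S A * chi T A)
      = ∑ S : Fin k → Bool, ∑ T : Fin k → Bool,
        (if S = T then (f S * f T) * 2^k else 0) :=
        Finset.sum_congr rfl fun S _ => Finset.sum_congr rfl fun T _ => h3 S T
    _ = ∑ S : Fin k → Bool, (f S * f S) * 2^k := by
        apply Finset.sum_congr rfl; intro S _
        rw [Finset.sum_ite_eq (univ : Finset (Fin k → Bool)) S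
          (fun T => (f S * f T) * 2^k), if_pos (Finset.mem_univ S)]
    _ = ∑ _S : Fin k → Bool, (2:ℝ)^k := by
        apply Finset.sum_congr rfl; intro S _; rw [hf S, one_mul]
    _ = 4 ^ k := by
        rw [Finset.sum_const, Finset.card_univ, nsmul_eq_mul]
        rw [Fintype.card_fun]
        push_cast
        rw [Fintype.card_bool, Fintype.card_fin, ← mul_pow]
        norm_num

lemma core {k : ℕ} {C : ℝ} (hC : |C| ≤ 1) (f : (Fin k → Bool) → ℝ)
    (hf : ∀ S, f S * f S = 1) (hb : ∑ S : Fin k → Bool, f S = 0) :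
    (0 ≤ C → ∑ S : Fin k → Bool, ∑ T : Fin k → Bool,
        (∏ j, (1 + pm (S j) * pm (T j) * C) / 4) * (f S * f T) ≤ C)
    ∧ (C ≤ 0 → C ≤ ∑ S : Fin k → Bool, ∑ T : Fin k → Bool,
        (∏ j, (1 + pm (S j) * pm (T j) * C) / 4) * (f S * f T)) := by
  have h4 : (0:ℝ) < 4^k := by positivity
  rw [fourier_pairs]
  set F : Finset (Fin k) → ℝ := fun A => ∑ S : Fin k → Bool, f S * chi S A with hF
  have hF0 : F ∅ = 0 := by
    simp only [hF, chi, Finset.prod_empty, mul_one]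
    exact hb
  have hpars : ∑ A ∈ (univ : Finset (Fin k)).powerset, F A * F A = 4^k :=
    parseval f hf
  constructor
  · intro hC0
    rw [div_le_iff₀ h4]
    calc ∑ A ∈ (univ : Finset (Fin k)).powerset, C ^ A.card * (F A * F A)
        ≤ ∑ A ∈ (univ : Finset (Fin k)).powerset, C * (F A * F A) := by
          apply Finset.sum_le_sum
          intro A _
          by_cases hA : A = ∅
          · subst hA; rw [hF0]; simp
          · apply mul_le_mul_of_nonneg_right _ (mul_self_nonneg (F A))
            have h1 : 1 ≤ A.card := Nat.one_le_iff_ne_zero.mpr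
              (fun h => hA (Finset.card_eq_zero.mp h))
            have hC1 : C ≤ 1 := by rw [abs_le] at hC; exact hC.2
            calc C ^ A.card ≤ C ^ 1 := pow_le_pow_of_le_one hC0 hC1 h1
              _ = C := pow_one C
      _ = C * 4^k := by rw [← Finset.mul_sum, hpars]
  · intro hC0
    rw [le_div_iff₀ h4]
    calc C * 4^k = ∑ A ∈ (univ : Finset (Fin k)).powerset, C * (F A * F A) := by
          rw [← Finset.mul_sum, hpars]
      _ ≤ ∑ A ∈ (univ : Finset (Fin k)).powerset, C ^ A.card * (F A * F A) := by
          apply Finset.sum_le_sum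
          intro A _
          by_cases hA : A = ∅
          · subst hA; rw [hF0]; simp
          · apply mul_le_mul_of_nonneg_right _ (mul_self_nonneg (F A))
            have h1 : 1 ≤ A.card := Nat.one_le_iff_ne_zero.mpr
              (fun h => hA (Finset.card_eq_zero.mp h))
            have habs : |C| ^ A.card ≤ |C| := by
              calc |C| ^ A.card ≤ |C| ^ 1 := pow_le_pow_of_le_one (abs_nonneg C) hC h1
                _ = |C| := pow_one _
            have h2 : -|C ^ A.card| ≤ C ^ A.card := neg_abs_le _
            rw [abs_pow] at h2
            have h3 : |C| = -C := abs_of_nonpos hC0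
            linarith

lemma Esum_eq {k : ℕ} (C : ℝ) (μ : ((Fin k → Bool) → Bool) → ℝ)
    (E : (Fin k → Bool) → (Fin k → Bool) → ℝ)
    (hE : ∀ S T, E S T = ∑ α, μ α * (pm (α S) * pm (α T))) :
    ∑ S : Fin k → Bool, ∑ T : Fin k → Bool,
      (∏ j, (1 + pm (S j) * pm (T j) * C) / 4) * E S T
    = ∑ α : (Fin k → Bool) → Bool, μ α * ∑ S : Fin k → Bool, ∑ T : Fin k → Bool,
      (∏ j, (1 + pm (S j) * pm (T j) * C) / 4) * (pm (α S) * pm (α T)) := by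
  calc ∑ S : Fin k → Bool, ∑ T : Fin k → Bool,
      (∏ j, (1 + pm (S j) * pm (T j) * C) / 4) * E S T
      = ∑ S : Fin k → Bool, ∑ T : Fin k → Bool, ∑ α : (Fin k → Bool) → Bool,
        (∏ j, (1 + pm (S j) * pm (T j) * C) / 4) * (μ α * (pm (α S) * pm (α T))) := by
        apply Finset.sum_congr rfl; intro S _
        apply Finset.sum_congr rfl; intro T _
        rw [hE, Finset.mul_sum]
    _ = ∑ α : (Fin k → Bool) → Bool, ∑ S : Fin k → Bool, ∑ T : Fin k → Bool,
        (∏ j, (1 + pm (S j) * pm (T j) * C) / 4) * (μ α * (pm (α S) * pm (α T))) := by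
        rw [Finset.sum_congr rfl (fun S _ => Finset.sum_comm), Finset.sum_comm]
    _ = ∑ α : (Fin k → Bool) → Bool, μ α * ∑ S : Fin k → Bool, ∑ T : Fin k → Bool,
        (∏ j, (1 + pm (S j) * pm (T j) * C) / 4) * (pm (α S) * pm (α T)) := by
        apply Finset.sum_congr rfl; intro α _
        rw [Finset.mul_sum]
        apply Finset.sum_congr rfl; intro S _
        rw [Finset.mul_sum]
        apply Finset.sum_congr rfl; intro T _
        ring

/-- The majority correlation map `T(C)` dominates the correlation map of any ensemble
of balanced Boolean functions on `[0,1)`, with the reverse inequality on `(-1,0]`. -/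
theorem stmt11 (k : ℕ) (hk : 0 < k) (β : ℝ) (hβ : 0 < β)
    (μ : ((Fin k → Bool) → Bool) → ℝ)
    (hμ0 : ∀ α, 0 ≤ μ α) (hμ1 : ∑ α, μ α = 1)
    (hbal : ∀ α, μ α ≠ 0 → ∑ S : Fin k → Bool, pm (α S) = 0)
    (E : (Fin k → Bool) → (Fin k → Bool) → ℝ)
    (hE : ∀ S T, E S T = ∑ α, μ α * (pm (α S) * pm (α T))) :
    (∀ C ∈ Set.Ico (0:ℝ) 1,
      Real.tanh β ^ 2 * ∑ S : Fin k → Bool, ∑ T : Fin k → Bool,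
          (∏ j, (1 + pm (S j) * pm (T j) * C) / 4) * E S T
      ≤ Real.tanh β ^ 2 * ∑ S : Fin k → Bool, ∑ T : Fin k → Bool,
          (∏ j, (1 + pm (S j) * pm (T j) * C) / 4) * Real.sign (∑ j, pm (S j) * pm (T j))) ∧
    (∀ C ∈ Set.Ioc (-1:ℝ) 0,
      Real.tanh β ^ 2 * ∑ S : Fin k → Bool, ∑ T : Fin k → Bool,
          (∏ j, (1 + pm (S j) * pm (T j) * C) / 4) * Real.sign (∑ j, pm (S j) * pm (T j))
      ≤ Real.tanh β ^ 2 * ∑ S : Fin k → Bool, ∑ T : Fin k → Bool,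
          (∏ j, (1 + pm (S j) * pm (T j) * C) / 4) * E S T) := by
  have htanh : (0:ℝ) ≤ Real.tanh β ^ 2 := sq_nonneg _
  constructor
  · intro C hC
    obtain ⟨hC0, hC1⟩ := hC
    apply mul_le_mul_of_nonneg_left _ htanh
    have hEC : ∑ S : Fin k → Bool, ∑ T : Fin k → Bool,
        (∏ j, (1 + pm (S j) * pm (T j) * C) / 4) * E S T ≤ C := by
      rw [Esum_eq C μ E hE]
      calc ∑ α : (Fin k → Bool) → Bool, μ α * ∑ S : Fin k → Bool, ∑ T : Fin k → Bool,
          (∏ j, (1 + pm (S j) * pm (T j) * C) / 4) * (pm (α S) * pm (α T))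
          ≤ ∑ α : (Fin k → Bool) → Bool, μ α * C := by
            apply Finset.sum_le_sum
            intro α _
            by_cases hμ : μ α = 0
            · simp [hμ]
            · apply mul_le_mul_of_nonneg_left _ (hμ0 α)
              exact (core (abs_le.mpr ⟨by linarith, le_of_lt hC1⟩)
                (fun S => pm (α S)) (fun S => pm_sq _) (hbal α hμ)).1 hC0
        _ = C := by rw [← Finset.sum_mul, hμ1, one_mul]
    exact le_trans hEC (sgn_ge hk hC0 (le_of_lt hC1))
  · intro C hC
    obtain ⟨hC0, hC1⟩ := hC
    apply mul_le_mul_of_nonneg_left _ htanh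
    have hEC : C ≤ ∑ S : Fin k → Bool, ∑ T : Fin k → Bool,
        (∏ j, (1 + pm (S j) * pm (T j) * C) / 4) * E S T := by
      rw [Esum_eq C μ E hE]
      calc C = ∑ α : (Fin k → Bool) → Bool, μ α * C := by
            rw [← Finset.sum_mul, hμ1, one_mul]
        _ ≤ ∑ α : (Fin k → Bool) → Bool, μ α * ∑ S : Fin k → Bool, ∑ T : Fin k → Bool,
            (∏ j, (1 + pm (S j) * pm (T j) * C) / 4) * (pm (α S) * pm (α T)) := by
            apply Finset.sum_le_sum
            intro α _
            by_cases hμ : μ α = 0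
            · simp [hμ]
            · apply mul_le_mul_of_nonneg_left _ (hμ0 α)
              exact (core (abs_le.mpr ⟨le_of_lt hC0, by linarith⟩)
                (fun S => pm (α S)) (fun S => pm_sq _) (hbal α hμ)).2 hC1
    exact le_trans (sgn_le hk (le_of_lt hC0) hC1) hEC
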